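/- Let X and Y be real Hilbert spaces with Y nonzero and finite-dimensional and X infinite-dimensional, and let B = L(X,Y) be the Banach space of bounded linear operators from X to Y, regarded as a Jordan triple with triple product {a,b,c} := (1/2)(a∘b*∘c + c∘b*∘a), where b* : Y → X is the Hilbert space adjoint. Then B is not ternary weakly amenable: there exists a continuous linear ternary derivation from B to B* which is not an inner ternary derivation. -/

import Mathlib

/-!
STATEMENT 17: Let `X`, `Y` be real Hilbert spaces with `Y` nonzero finite-dimensional
and `X` infinite-dimensional, and let `B = L(X,Y)` be the Banach space of bounded
linear operators from `X` to `Y`, a Jordan triple under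
`{a,b,c} := (1/2)(a∘b*∘c + c∘b*∘a)` (`b*` the Hilbert space adjoint).  Then `B` is
not ternary weakly amenable: there is a continuous linear ternary derivation from
`B` to `B*` which is not an inner ternary derivation.
-/

noncomputable section

variable {X Y : Type*} [NormedAddCommGroup X] [InnerProductSpace ℝ X] [CompleteSpace X]
  [NormedAddCommGroup Y] [InnerProductSpace ℝ Y] [FiniteDimensional ℝ Y]

/-- The triple product `{a,b,c} = (1/2)(a∘b*∘c + c∘b*∘a)` on `B = L(X,Y)`. -/
def jtripB (a b c : X →L[ℝ] Y) : X →L[ℝ] Y :=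
  (2 : ℝ)⁻¹ • (a.comp ((ContinuousLinearMap.adjoint b).comp c)
    + c.comp ((ContinuousLinearMap.adjoint b).comp a))

/-- A continuous linear map `δ : B → B*` is a ternary derivation:
`δ{a,b,c} = {δ(a),b,c} + {a,δ(b),c} + {a,b,δ(c)}`, written out pointwise on `B*`,
where `{a,b,φ}(x) = {φ,b,a}(x) := φ({b,a,x})` and `{a,φ,b}(x) := φ({a,x,b})`. -/
def IsTernaryDerB (δ : (X →L[ℝ] Y) →L[ℝ] ((X →L[ℝ] Y) →L[ℝ] ℝ)) : Prop :=
  ∀ a b c x : X →L[ℝ] Y, δ (jtripB a b c) x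
    = δ a (jtripB b c x) + δ b (jtripB a x c) + δ c (jtripB b a x)

/-- `δ : B → B*` is an inner ternary derivation: a finite sum of the maps
`a ↦ {b,φ,a} − {φ,b,a}`, i.e. pointwise `a ↦ (x ↦ φ({b,x,a}) − φ({b,a,x}))`. -/
def IsInnerTernaryDerB (δ : (X →L[ℝ] Y) →L[ℝ] ((X →L[ℝ] Y) →L[ℝ] ℝ)) : Prop :=
  ∃ (n : ℕ) (b : Fin n → (X →L[ℝ] Y)) (φ : Fin n → ((X →L[ℝ] Y) →L[ℝ] ℝ)),
    ∀ a x : X →L[ℝ] Y, δ a x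
      = ∑ i, (φ i (jtripB (b i) x a) - φ i (jtripB (b i) a x))

open scoped RealInnerProductSpace ENNReal
open ContinuousLinearMap

set_option linter.unusedSectionVars false

def trY (f : Y →L[ℝ] Y) : ℝ := LinearMap.trace ℝ Y ↑f

/-- trace as a continuous linear functional on `Y →L[ℝ] Y`. -/
def trYL : (Y →L[ℝ] Y) →L[ℝ] ℝ :=
  LinearMap.toContinuousLinearMap ((LinearMap.trace ℝ Y).comp (ContinuousLinearMap.coeLM ℝ))

lemma trYL_apply (f : Y →L[ℝ] Y) : trYL f = trY f := rfl

/-- the adjoint as a continuous linear map on `B`. -/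
def adjL : (X →L[ℝ] Y) →L[ℝ] (Y →L[ℝ] X) :=
  LinearMap.mkContinuous
    { toFun := fun A => adjoint A
      map_add' := fun A B => map_add _ A B
      map_smul' := fun c A => by
        have := (ContinuousLinearMap.adjoint (𝕜 := ℝ) (E := X) (F := Y)).map_smulₛₗ c A
        simpa using this }
    1 (fun A => by
      rw [one_mul]
      exact le_of_eq (LinearIsometryEquiv.norm_map _ A))

lemma adjL_apply (A : X →L[ℝ] Y) : adjL A = adjoint A := rfl

/-- The candidate derivation associated to a skew operator `S` on `X`. -/
def delS (S : X →L[ℝ] X) : (X →L[ℝ] Y) →L[ℝ] ((X →L[ℝ] Y) →L[ℝ] ℝ) :=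
  ((compL ℝ (X →L[ℝ] Y) (Y →L[ℝ] Y) ℝ) trYL) ∘L
    ((compL ℝ Y X Y).flip) ∘L ((compL ℝ Y X X) S) ∘L adjL

lemma delS_apply (S : X →L[ℝ] X) (a x : X →L[ℝ] Y) :
    delS S a x = trY (x ∘L (S ∘L (adjoint a))) := by
  simp [delS, compL_apply, flip_apply, trYL_apply, adjL_apply]

-- ===== derivation property =====
lemma trY_add (f g : Y →L[ℝ] Y) : trY (f + g) = trY f + trY g := by simp [trY]
lemma trY_smul (c : ℝ) (f : Y →L[ℝ] Y) : trY (c • f) = c * trY f := by simp [trY]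
lemma trY_neg (f : Y →L[ℝ] Y) : trY (-f) = - trY f := by simp [trY]
lemma trY_cyc (P Q : Y →L[ℝ] Y) : trY (P ∘L Q) = trY (Q ∘L P) := by
  have := LinearMap.trace_mul_comm ℝ (P : Y →ₗ[ℝ] Y) (Q : Y →ₗ[ℝ] Y)
  simpa [trY, Module.End.mul_eq_comp] using this
lemma trY_eq_sum_inner (f : Y →L[ℝ] Y) :
    trY f = ∑ i, ⟪stdOrthonormalBasis ℝ Y i, f (stdOrthonormalBasis ℝ Y i)⟫ := by
  set e := stdOrthonormalBasis ℝ Y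
  rw [trY, LinearMap.trace_eq_matrix_trace ℝ e.toBasis, Matrix.trace]
  congr 1
  ext i
  simp [Matrix.diag, LinearMap.toMatrix_apply, OrthonormalBasis.coe_toBasis,
    OrthonormalBasis.coe_toBasis_repr_apply, OrthonormalBasis.repr_apply_apply]
lemma trY_adj (f : Y →L[ℝ] Y) : trY (adjoint f) = trY f := by
  rw [trY_eq_sum_inner, trY_eq_sum_inner]
  refine Finset.sum_congr rfl fun i _ => ?_
  rw [adjoint_inner_right, real_inner_comm]

lemma adj_add (A B : X →L[ℝ] Y) : adjoint (A + B) = adjoint A + adjoint B := by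
  rw [← adjL_apply, ← adjL_apply, ← adjL_apply, map_add]
lemma adj_smul (r : ℝ) (A : X →L[ℝ] Y) : adjoint (r • A) = r • adjoint A := by
  rw [← adjL_apply, ← adjL_apply, map_smul]

set_option maxHeartbeats 2000000 in
theorem delS_der (S : X →L[ℝ] X) (hskew : adjoint S = -S) (a b c x : X →L[ℝ] Y) :
    trY (x ∘L (S ∘L adjoint ((2 : ℝ)⁻¹ • (a.comp ((adjoint b).comp c)
        + c.comp ((adjoint b).comp a)))))
      = trY (((2 : ℝ)⁻¹ • (b.comp ((adjoint c).comp x) + x.comp ((adjoint c).comp b)))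
            ∘L (S ∘L adjoint a))
        + trY (((2 : ℝ)⁻¹ • (a.comp ((adjoint x).comp c) + c.comp ((adjoint x).comp a)))
            ∘L (S ∘L adjoint b))
        + trY (((2 : ℝ)⁻¹ • (b.comp ((adjoint a).comp x) + x.comp ((adjoint a).comp b)))
            ∘L (S ∘L adjoint c)) := by
  have I1 : trY ((b.comp ((adjoint c).comp x)).comp (S.comp (adjoint a)))
      = trY (x.comp (S.comp ((adjoint a).comp (b.comp (adjoint c))))) := by
    have h := trY_cyc (b.comp (adjoint c)) (x.comp (S.comp (adjoint a)))
    simpa only [ContinuousLinearMap.comp_assoc] using h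
  have I2 : trY ((b.comp ((adjoint a).comp x)).comp (S.comp (adjoint c)))
      = trY (x.comp (S.comp ((adjoint c).comp (b.comp (adjoint a))))) := by
    have h := trY_cyc (b.comp (adjoint a)) (x.comp (S.comp (adjoint c)))
    simpa only [ContinuousLinearMap.comp_assoc] using h
  have I3 : trY ((a.comp ((adjoint x).comp c)).comp (S.comp (adjoint b)))
      = - trY ((x.comp ((adjoint a).comp b)).comp (S.comp (adjoint c))) := by
    have h1 : trY ((a.comp ((adjoint x).comp c)).comp (S.comp (adjoint b)))
        = trY ((c.comp (S.comp (adjoint b))).comp (a.comp (adjoint x))) := by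
      have h := trY_cyc (a.comp (adjoint x)) (c.comp (S.comp (adjoint b)))
      simpa only [ContinuousLinearMap.comp_assoc] using h
    have h2 : adjoint ((c.comp (S.comp (adjoint b))).comp (a.comp (adjoint x)))
        = -((x.comp ((adjoint a).comp b)).comp (S.comp (adjoint c))) := by
      simp only [adjoint_comp, adjoint_adjoint, hskew, ContinuousLinearMap.comp_neg,
        ContinuousLinearMap.neg_comp, ContinuousLinearMap.comp_assoc]
    have h3 := trY_adj ((c.comp (S.comp (adjoint b))).comp (a.comp (adjoint x)))
    rw [h1, ← h3, h2, trY_neg]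
  have I4 : trY ((c.comp ((adjoint x).comp a)).comp (S.comp (adjoint b)))
      = - trY ((x.comp ((adjoint c).comp b)).comp (S.comp (adjoint a))) := by
    have h1 : trY ((c.comp ((adjoint x).comp a)).comp (S.comp (adjoint b)))
        = trY ((a.comp (S.comp (adjoint b))).comp (c.comp (adjoint x))) := by
      have h := trY_cyc (c.comp (adjoint x)) (a.comp (S.comp (adjoint b)))
      simpa only [ContinuousLinearMap.comp_assoc] using h
    have h2 : adjoint ((a.comp (S.comp (adjoint b))).comp (c.comp (adjoint x)))
        = -((x.comp ((adjoint c).comp b)).comp (S.comp (adjoint a))) := by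
      simp only [adjoint_comp, adjoint_adjoint, hskew, ContinuousLinearMap.comp_neg,
        ContinuousLinearMap.neg_comp, ContinuousLinearMap.comp_assoc]
    have h3 := trY_adj ((a.comp (S.comp (adjoint b))).comp (c.comp (adjoint x)))
    rw [h1, ← h3, h2, trY_neg]
  -- expand the left-hand side
  rw [adj_smul, adj_add, adjoint_comp, adjoint_comp, adjoint_comp, adjoint_comp,
    adjoint_adjoint]
  simp only [ContinuousLinearMap.comp_smul, ContinuousLinearMap.smul_comp,
    ContinuousLinearMap.comp_add, ContinuousLinearMap.add_comp, trY_smul, trY_add,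
    ContinuousLinearMap.comp_assoc]
  simp only [ContinuousLinearMap.comp_assoc] at I1 I2 I3 I4
  rw [I1, I2, I3, I4]
  ring

-- ===== rank one operators =====
def rk (y : Y) (u : X) : X →L[ℝ] Y := (innerSL ℝ u).smulRight y

lemma rk_apply (y : Y) (u ξ : X) : rk y u ξ = ⟪u, ξ⟫ • y := rfl

lemma adj_rk (y : Y) (u : X) : adjoint (rk y u) = (innerSL ℝ y).smulRight u := by
  refine ((eq_adjoint_iff ((innerSL ℝ y).smulRight u) (rk y u)).mpr ?_).symm
  intro η ξ
  simp only [rk, smulRight_apply, innerSL_apply_apply, real_inner_smul_left, real_inner_smul_right]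
  rw [real_inner_comm η y]
  ring

lemma adj_rk_apply (y : Y) (u : X) (η : Y) : adjoint (rk y u) η = ⟪y, η⟫ • u := by
  rw [adj_rk]; rfl

lemma rk_add_right (y : Y) (u v : X) : rk y (u + v) = rk y u + rk y v := by
  ext ξ
  simp [rk_apply, inner_add_left, add_smul]

lemma rk_smul_right (y : Y) (r : ℝ) (u : X) : rk y (r • u) = r • rk y u := by
  ext ξ
  simp [rk_apply, real_inner_smul_left, mul_smul]

lemma rk_norm (y : Y) (u : X) : ‖rk y u‖ ≤ ‖u‖ * ‖y‖ := by
  rw [rk, ContinuousLinearMap.norm_smulRight_apply, innerSL_apply_norm]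

lemma trY_rankone (w z : Y) : trY ((innerSL ℝ w).smulRight z) = ⟪w, z⟫ := by
  rw [trY_eq_sum_inner]
  have h := (stdOrthonormalBasis ℝ Y).sum_inner_mul_inner w z
  simpa [real_inner_smul_right] using h

lemma rk_expand (y : Y) (u : X) :
    rk y u = ∑ j, ⟪stdOrthonormalBasis ℝ Y j, y⟫ • rk (stdOrthonormalBasis ℝ Y j) u := by
  ext ξ
  rw [ContinuousLinearMap.sum_apply]
  simp only [ContinuousLinearMap.smul_apply, rk_apply]
  calc ⟪u, ξ⟫ • y = ⟪u, ξ⟫ • ∑ j, ⟪stdOrthonormalBasis ℝ Y j, y⟫ • stdOrthonormalBasis ℝ Y j := by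
        rw [(stdOrthonormalBasis ℝ Y).sum_repr' y]
    _ = ∑ j, ⟪stdOrthonormalBasis ℝ Y j, y⟫ • ⟪u, ξ⟫ • stdOrthonormalBasis ℝ Y j := by
        rw [Finset.smul_sum]
        exact Finset.sum_congr rfl fun j _ => smul_comm _ _ _

lemma key1 {w : Y} (hw : ⟪w, w⟫ = 1) (b : X →L[ℝ] Y) (u v : X) :
    jtripB b (rk w v) (rk w u) - jtripB b (rk w u) (rk w v)
      = (2 : ℝ)⁻¹ • (rk (b v) u - rk (b u) v) := by
  ext ξ
  simp only [jtripB, ContinuousLinearMap.sub_apply, ContinuousLinearMap.smul_apply,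
    ContinuousLinearMap.add_apply, ContinuousLinearMap.coe_comp', Function.comp_apply,
    adj_rk_apply, rk_apply]
  simp only [real_inner_smul_right, map_smul, hw, mul_one, smul_smul]
  rw [real_inner_comm v u]
  module

lemma key2 {w : Y} (hw : ⟪w, w⟫ = 1) (S : X →L[ℝ] X) (u v : X) :
    delS S (rk w u) (rk w v) = ⟪v, S u⟫ := by
  rw [delS_apply]
  have hcomp : (rk w v) ∘L (S ∘L adjoint (rk w u)) = (innerSL ℝ w).smulRight (⟪v, S u⟫ • w) := by
    ext η
    simp only [ContinuousLinearMap.coe_comp', Function.comp_apply, adj_rk_apply,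
      smulRight_apply, innerSL_apply_apply, rk_apply, map_smul, real_inner_smul_right]
  rw [hcomp, trY_rankone, real_inner_smul_right, hw, mul_one]

theorem exists_skew_surjective (hX : ¬ FiniteDimensional ℝ X) :
    ∃ S : X →L[ℝ] X, adjoint S = -S ∧ Function.Surjective S := by
  obtain ⟨w, b, -⟩ := exists_hilbertBasis ℝ X
  have hwinf : Infinite w := by
    rw [Set.infinite_coe_iff]
    intro hfin
    apply hX
    haveI := hfin.to_subtype
    have hfd : FiniteDimensional ℝ (Submodule.span ℝ (Set.range ⇑b)) :=
      FiniteDimensional.span_of_finite ℝ (Set.finite_range _)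
    have hclosed : IsClosed ((Submodule.span ℝ (Set.range ⇑b)) : Set X) :=
      Submodule.closed_of_finiteDimensional _
    have htop : Submodule.span ℝ (Set.range ⇑b) = ⊤ := by
      rw [← hclosed.submodule_topologicalClosure_eq]
      exact b.dense_span
    rw [htop] at hfd
    exact (Submodule.topEquiv (R := ℝ) (M := X)).finiteDimensional
  have hcard : Cardinal.mk (↥w ⊕ ↥w) = Cardinal.mk ↥w := by
    rw [Cardinal.mk_sum]
    simpa using Cardinal.add_eq_self (Cardinal.infinite_iff.mp hwinf)
  obtain ⟨e⟩ := Cardinal.eq.mp hcard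
  set σ : w ≃ w := e.symm.trans ((Equiv.sumComm w w).trans e) with hσdef
  set ε : w → ℝ := fun t => if (e.symm t).isLeft then (1 : ℝ) else -1 with hεdef
  have hσσ : ∀ t, σ (σ t) = t := by
    intro t; simp [hσdef]
  have hεσ : ∀ t, ε (σ t) = - ε t := by
    intro t
    simp only [hεdef, hσdef, Equiv.trans_apply, Equiv.symm_apply_apply]
    rcases e.symm t with s | s <;> simp
  have hεsq : ∀ t, ε t * ε t = 1 := by
    intro t; by_cases h : (e.symm t).isLeft <;> simp [hεdef, h]
  have hεnorm : ∀ t (r : ℝ), ‖ε t * r‖ = ‖r‖ := by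
    intro t r
    by_cases h : (e.symm t).isLeft <;> simp [hεdef, h, norm_mul]
  have hmem : ∀ f : lp (fun _ : w => ℝ) 2, Memℓp (fun t => ε t * f (σ t)) 2 := by
    intro f
    apply memℓp_gen
    have hs : Summable (fun t : w => ‖f t‖ ^ (2 : ℝ≥0∞).toReal) :=
      (memℓp_gen_iff (by norm_num)).mp (lp.memℓp f)
    have h2 := (Equiv.summable_iff σ (f := fun t : w => ‖f t‖ ^ (2 : ℝ≥0∞).toReal)).mpr hs
    refine h2.congr fun t => ?_
    simp only [Function.comp]
    rw [hεnorm]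
  set Jf : lp (fun _ : w => ℝ) 2 → lp (fun _ : w => ℝ) 2 :=
    fun f => ⟨fun t => ε t * f (σ t), hmem f⟩ with hJdef
  have hJapp : ∀ f t, (Jf f) t = ε t * f (σ t) := fun f t => rfl
  have hJadd : ∀ f g, Jf (f + g) = Jf f + Jf g := by
    intro f g
    apply lp.ext
    funext t
    rw [lp.coeFn_add, Pi.add_apply, hJapp, hJapp, hJapp, lp.coeFn_add, Pi.add_apply, mul_add]
  have hJsmul : ∀ (c : ℝ) f, Jf (c • f) = c • Jf f := by
    intro c f
    apply lp.ext
    funext t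
    rw [lp.coeFn_smul, Pi.smul_apply, hJapp, hJapp, lp.coeFn_smul, Pi.smul_apply]
    simp only [smul_eq_mul]
    ring
  have hJnorm : ∀ f, ‖Jf f‖ = ‖f‖ := by
    intro f
    rw [lp.norm_eq_tsum_rpow (by norm_num) (Jf f), lp.norm_eq_tsum_rpow (by norm_num) f]
    congr 1
    rw [← Equiv.tsum_eq σ (fun t => ‖f t‖ ^ (2 : ℝ≥0∞).toReal)]
    refine tsum_congr fun t => ?_
    rw [hJapp, hεnorm]
  set Slin : X →ₗ[ℝ] X :=
    { toFun := fun x => b.repr.symm (Jf (b.repr x))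
      map_add' := by
        intro x y
        show b.repr.symm (Jf (b.repr (x + y)))
          = b.repr.symm (Jf (b.repr x)) + b.repr.symm (Jf (b.repr y))
        rw [map_add, hJadd, map_add]
      map_smul' := by
        intro c x
        show b.repr.symm (Jf (b.repr (c • x))) = (RingHom.id ℝ) c • b.repr.symm (Jf (b.repr x))
        rw [map_smul, hJsmul, map_smul, RingHom.id_apply] } with hSlin
  have hbound : ∀ x, ‖Slin x‖ ≤ 1 * ‖x‖ := by
    intro x
    show ‖b.repr.symm (Jf (b.repr x))‖ ≤ 1 * ‖x‖
    rw [one_mul, LinearIsometryEquiv.norm_map, hJnorm, LinearIsometryEquiv.norm_map]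
  set S : X →L[ℝ] X := Slin.mkContinuous 1 hbound with hS
  have hSa : ∀ x, S x = b.repr.symm (Jf (b.repr x)) := fun _ => rfl
  have hSS : ∀ x, S (S x) = -x := by
    intro x
    rw [hSa, hSa, b.repr.apply_symm_apply]
    have hJJ : Jf (Jf (b.repr x)) = - (b.repr x) := by
      apply lp.ext
      funext t
      rw [lp.coeFn_neg, Pi.neg_apply, hJapp, hJapp, hσσ, hεσ]
      have h := hεsq t
      calc ε t * (-ε t * (b.repr x) t) = -((ε t * ε t) * (b.repr x) t) := by ring
        _ = -(b.repr x) t := by rw [h, one_mul]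
    rw [hJJ, map_neg, b.repr.symm_apply_apply]
  have hkey : ∀ x y, ⟪S x, y⟫ = -⟪x, S y⟫ := by
    intro x y
    have h1 : ⟪S x, y⟫ = ∑' t, (ε t * (b.repr x) (σ t)) * ((b.repr y) t) := by
      rw [← b.repr.inner_map_map (S x) y, hSa, b.repr.apply_symm_apply, lp.inner_eq_tsum]
      refine tsum_congr fun t => ?_
      rw [hJapp, RCLike.inner_apply]
      simp
      ring
    have h2 : ⟪x, S y⟫ = ∑' t, ((b.repr x) t) * (ε t * (b.repr y) (σ t)) := by
      rw [← b.repr.inner_map_map x (S y), hSa, b.repr.apply_symm_apply, lp.inner_eq_tsum]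
      refine tsum_congr fun t => ?_
      rw [hJapp, RCLike.inner_apply]
      simp
      ring
    rw [h1, h2, ← tsum_neg]
    rw [← Equiv.tsum_eq σ (fun t => -((b.repr x) t * (ε t * (b.repr y) (σ t))))]
    refine tsum_congr fun t => ?_
    rw [hσσ, hεσ]
    ring
  refine ⟨S, ?_, fun y => ⟨-(S y), by rw [map_neg, hSS, neg_neg]⟩⟩
  refine ((eq_adjoint_iff (-S) S).mpr ?_).symm
  intro x y
  rw [ContinuousLinearMap.neg_apply, inner_neg_left, hkey, neg_neg]

set_option maxHeartbeats 1000000 in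
/-- For `Y ≠ 0` finite-dimensional and `X` infinite-dimensional, the rectangular
factor `B = L(X,Y)` is not ternary weakly amenable. -/
theorem rectangular_factor_not_ternary_weakly_amenable
    [Nontrivial Y] (hX : ¬ FiniteDimensional ℝ X) :
    ∃ δ : (X →L[ℝ] Y) →L[ℝ] ((X →L[ℝ] Y) →L[ℝ] ℝ),
      IsTernaryDerB δ ∧ ¬ IsInnerTernaryDerB δ := by
  obtain ⟨S, hskew, hsurj⟩ := exists_skew_surjective (X := X) hX
  refine ⟨delS S, ?_, ?_⟩
  · intro a b c x
    rw [delS_apply, delS_apply, delS_apply, delS_apply]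
    simp only [jtripB]
    exact delS_der S hskew a b c x
  · rintro ⟨n, bb, φ, hinner⟩
    apply hX
    obtain ⟨y0, hy0⟩ := exists_ne (0 : Y)
    set w : Y := ‖y0‖⁻¹ • y0 with hwdef
    have hwnorm : ‖w‖ = 1 := norm_smul_inv_norm hy0
    have hw : ⟪w, w⟫ = 1 := by
      rw [real_inner_self_eq_norm_mul_norm, hwnorm, one_mul]
    have hFlin : ∀ (i : Fin n) (j : Fin (Module.finrank ℝ Y)), ∃ cij : X,
        ∀ v : X, ⟪cij, v⟫ = φ i (rk (stdOrthonormalBasis ℝ Y j) v) := by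
      intro i j
      set F : X →ₗ[ℝ] ℝ :=
        { toFun := fun v => φ i (rk (stdOrthonormalBasis ℝ Y j) v)
          map_add' := fun u v => by
            show φ i (rk (stdOrthonormalBasis ℝ Y j) (u + v))
              = φ i (rk (stdOrthonormalBasis ℝ Y j) u) + φ i (rk (stdOrthonormalBasis ℝ Y j) v)
            rw [rk_add_right, map_add]
          map_smul' := fun r v => by
            show φ i (rk (stdOrthonormalBasis ℝ Y j) (r • v))
              = r • φ i (rk (stdOrthonormalBasis ℝ Y j) v)
            rw [rk_smul_right, map_smul] } with hF
      have hbound : ∀ v, ‖F v‖ ≤ (‖φ i‖ * ‖stdOrthonormalBasis ℝ Y j‖) * ‖v‖ := by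
        intro v
        calc ‖F v‖ = ‖φ i (rk (stdOrthonormalBasis ℝ Y j) v)‖ := rfl
          _ ≤ ‖φ i‖ * ‖rk (stdOrthonormalBasis ℝ Y j) v‖ := (φ i).le_opNorm _
          _ ≤ ‖φ i‖ * (‖v‖ * ‖stdOrthonormalBasis ℝ Y j‖) := by
              gcongr
              exact rk_norm _ _
          _ = (‖φ i‖ * ‖stdOrthonormalBasis ℝ Y j‖) * ‖v‖ := by ring
      refine ⟨(InnerProductSpace.toDual ℝ X).symm (F.mkContinuous _ hbound), fun v => ?_⟩
      rw [InnerProductSpace.toDual_symm_apply]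
      rfl
    choose cvec hcvec using hFlin
    set d : Fin n → Fin (Module.finrank ℝ Y) → X :=
      fun i j => adjoint (bb i) (stdOrthonormalBasis ℝ Y j) with hd
    have hmaster : ∀ u v : X, ⟪v, S u⟫
        = ∑ i, (2:ℝ)⁻¹ * (φ i (rk ((bb i) v) u) - φ i (rk ((bb i) u) v)) := by
      intro u v
      rw [← key2 hw S u v, hinner (rk w u) (rk w v)]
      refine Finset.sum_congr rfl fun i _ => ?_
      rw [← map_sub (φ i), key1 hw (bb i) u v, map_smul, smul_eq_mul, map_sub]
    have hexp : ∀ (i : Fin n) (y : Y) (u : X),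
        φ i (rk y u) = ∑ j, ⟪stdOrthonormalBasis ℝ Y j, y⟫ * ⟪cvec i j, u⟫ := by
      intro i y u
      rw [rk_expand y u, map_sum]
      refine Finset.sum_congr rfl fun j _ => ?_
      rw [map_smul, hcvec i j u, smul_eq_mul]
    set Fsub : Submodule ℝ X := Submodule.span ℝ
      ((Set.range fun p : Fin n × Fin (Module.finrank ℝ Y) => d p.1 p.2)
        ∪ (Set.range fun p : Fin n × Fin (Module.finrank ℝ Y) => cvec p.1 p.2)) with hFsub
    have hS_mem : ∀ u : X, S u ∈ Fsub := by
      intro u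
      have hSu : S u = ∑ i, ∑ j, (((2:ℝ)⁻¹ * ⟪cvec i j, u⟫) • d i j
          - ((2:ℝ)⁻¹ * ⟪d i j, u⟫) • cvec i j) := by
        apply ext_inner_left ℝ
        intro v
        rw [hmaster u v, inner_sum]
        refine Finset.sum_congr rfl fun i _ => ?_
        rw [inner_sum, hexp i ((bb i) v) u, hexp i ((bb i) u) v, ← Finset.sum_sub_distrib,
          Finset.mul_sum]
        refine Finset.sum_congr rfl fun j _ => ?_
        rw [inner_sub_right, real_inner_smul_right, real_inner_smul_right]
        have h1 : ⟪d i j, v⟫ = ⟪stdOrthonormalBasis ℝ Y j, (bb i) v⟫ :=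
          adjoint_inner_left (bb i) v (stdOrthonormalBasis ℝ Y j)
        have h2 : ⟪d i j, u⟫ = ⟪stdOrthonormalBasis ℝ Y j, (bb i) u⟫ :=
          adjoint_inner_left (bb i) u (stdOrthonormalBasis ℝ Y j)
        rw [← h1, ← h2, real_inner_comm v (d i j), real_inner_comm v (cvec i j)]
        ring
      rw [hSu]
      refine Submodule.sum_mem _ fun i _ => Submodule.sum_mem _ fun j _ =>
        Submodule.sub_mem _ ?_ ?_
      · exact Submodule.smul_mem _ _ (Submodule.subset_span (Or.inl ⟨(i, j), rfl⟩))
      · exact Submodule.smul_mem _ _ (Submodule.subset_span (Or.inr ⟨(i, j), rfl⟩))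
    have hfd : FiniteDimensional ℝ Fsub :=
      FiniteDimensional.span_of_finite ℝ ((Set.finite_range _).union (Set.finite_range _))
    have htop : Fsub = ⊤ := by
      rw [eq_top_iff]
      intro z _
      obtain ⟨u, hu⟩ := hsurj z
      rw [← hu]
      exact hS_mem u
    rw [htop] at hfd
    exact Submodule.topEquiv.finiteDimensional
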